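/- arXiv:2209.02947 — 4 statements merged into one kernel-verified Lean document; each statement's English description precedes it below -/
import Mathlib

section
/- Let X be a Banach space and Y ⊆ X a 1-complemented closed subspace, i.e., there is a bounded linear projection P : X → Y with ‖P‖ = 1 and P(y) = y for all y ∈ Y. If the dual X* has the w*-sequential Kadec–Klee property (every sequence in the unit sphere of X* converging weak-star to a point of the unit sphere converges in norm), then Y* also has the w*-sequential Kadec–Klee property. -/
/-- The dual of `Z` has the w*-sequential Kadec–Klee property: every sequence of norm-one
functionals converging weak-star to a norm-one functional converges in norm. -/
def WStarSeqKK (Z : Type*) [NormedAddCommGroup Z] [NormedSpace ℝ Z] : Prop :=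
  ∀ (f : ℕ → (Z →L[ℝ] ℝ)) (g : Z →L[ℝ] ℝ), (∀ n, ‖f n‖ = 1) → ‖g‖ = 1 →
    (∀ z : Z, Filter.Tendsto (fun n => f n z) Filter.atTop (nhds (g z))) →
    Filter.Tendsto (fun n => ‖f n - g‖) Filter.atTop (nhds 0)

open Filter Topology

theorem Submodule.opNorm_comp_projection {𝕜 X F : Type*} [NontriviallyNormedField 𝕜]
    [NormedAddCommGroup X] [NormedSpace 𝕜 X] [SeminormedAddCommGroup F] [NormedSpace 𝕜 F]
    {Y : Submodule 𝕜 X} (P : X →L[𝕜] Y) (hP : ‖P‖ ≤ 1) (hPproj : ∀ y : Y, P (y : X) = y)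
    (h : Y →L[𝕜] F) : ‖h ∘L P‖ = ‖h‖ := by
  apply le_antisymm
  · calc ‖h ∘L P‖ ≤ ‖h‖ * ‖P‖ := h.opNorm_comp_le P
      _ ≤ ‖h‖ * 1 := by gcongr
      _ = ‖h‖ := mul_one _
  · refine h.opNorm_le_bound (norm_nonneg _) fun y => ?_
    calc ‖h y‖ = ‖(h ∘L P) (y : X)‖ := by simp [hPproj y]
      _ ≤ ‖h ∘L P‖ * ‖y‖ := (h ∘L P).le_opNorm (y : X)

theorem stmt_0_general {X : Type*} [NormedAddCommGroup X] [NormedSpace ℝ X]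
    (Y : Submodule ℝ X)
    (P : X →L[ℝ] Y) (hPnorm : ‖P‖ = 1) (hPproj : ∀ y : Y, P (y : X) = y)
    (hX : WStarSeqKK X) :
    WStarSeqKK Y := by
  intro f g hf hg hconv
  have hext := Submodule.opNorm_comp_projection (F := ℝ) P hPnorm.le hPproj
  have hXconv : Tendsto (fun n => ‖f n ∘L P - g ∘L P‖) atTop (𝓝 0) :=
    hX (fun n => f n ∘L P) (g ∘L P) (fun n => by rw [hext, hf n]) (by rw [hext, hg])
      fun x => hconv (P x)
  have hdist : ∀ n, ‖f n ∘L P - g ∘L P‖ = ‖f n - g‖ := fun n => by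
    rw [← ContinuousLinearMap.sub_comp, hext]
  simpa only [hdist] using hXconv

/-- The w*-sequential Kadec–Klee property of the dual passes to
1-complemented closed subspaces. -/
theorem stmt_0 {X : Type*} [NormedAddCommGroup X] [NormedSpace ℝ X] [CompleteSpace X]
    (Y : Submodule ℝ X) (hYc : IsClosed (Y : Set X))
    (P : X →L[ℝ] Y) (hPnorm : ‖P‖ = 1) (hPproj : ∀ y : Y, P (y : X) = y)
    (hX : WStarSeqKK X) :
    WStarSeqKK Y :=
  stmt_0_general Y P hPnorm hPproj hX
end

section
/- Let X and Y be Banach spaces such that every bounded linear operator from X to Y* that attains its norm is finite rank, and suppose the norm-attaining operators are not dense in L(X, Y*). If X ⊗̂_π Y is identified with a predual so that each z ∈ X ⊗̂_π Y attaining its projective norm at a representation z = Σ λ_n x_n ⊗ y_n forces a norm-one T ∈ L(X,Y*) with T(x_n)(y_n) = 1 for all n, then every element of NA_π(X ⊗̂_π Y) lies in the (algebraic) tensor product X ⊗ Y whenever additionally Y is a Hilbert space: concretely, if X is infinite dimensional with norm locally depending on finitely many coordinates and Y is an infinite-dimensional Hilbert space, then NA_π(X ⊗̂_π Y) ⊆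 X ⊗ Y. -/
universe u

/-- `m : X → Y → Z` realises `Z` as the projective tensor product `X ⊗̂_π Y`:
elementary tensors have norm `‖x‖·‖y‖`, their span is dense, and every bounded bilinear
map into a Banach space factors through `Z` with the same norm. -/
def IsProjTensorProd {X Y Z : Type*} [NormedAddCommGroup X] [NormedSpace ℝ X]
    [NormedAddCommGroup Y] [NormedSpace ℝ Y] [NormedAddCommGroup Z] [NormedSpace ℝ Z]
    (m : X →L[ℝ] Y →L[ℝ] Z) : Prop :=
  (∀ (x : X) (y : Y), ‖m x y‖ = ‖x‖ * ‖y‖) ∧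
  (Submodule.span ℝ (Set.range fun p : X × Y => m p.1 p.2)).topologicalClosure = ⊤ ∧
  (∀ (W : Type u) [NormedAddCommGroup W] [NormedSpace ℝ W] [CompleteSpace W]
    (B : X →L[ℝ] Y →L[ℝ] W), ∃ T : Z →L[ℝ] W, ‖T‖ = ‖B‖ ∧ ∀ (x : X) (y : Y), T (m x y) = B x y)

/-- The norm of `X` locally depends upon finitely many coordinates. -/
def NormLocallyDependsOnFinitelyManyCoordinates (X : Type*) [NormedAddCommGroup X]
    [NormedSpace ℝ X] : Prop :=
  ∀ x : X, x ≠ 0 → ∃ ε > (0 : ℝ), ∃ N : ℕ, ∃ f : Fin N → (X →L[ℝ] ℝ),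
    ∃ φ : (Fin N → ℝ) → ℝ, Continuous φ ∧
      ∀ y : X, ‖y - x‖ < ε → ‖y‖ = φ (fun i => f i y)

/-!
Let `f` be a norming functional of `z = ∑ xₙ ⊗ yₙ`. The bilinear form `B = f ∘ m` has norm at
most one, so `‖z‖ = ∑ ‖xₙ‖ ‖yₙ‖` forces `B xₙ yₙ = ‖xₙ‖ ‖yₙ‖` for every `n`. Writing
`B a b = ⟪S a, b⟫` with a contraction `S : X → Y` (Riesz), equality in Cauchy–Schwarz puts each
`yₙ` with `xₙ ≠ 0` on the ray through `S xₙ`, and `S` attains its norm. Near a norm-attaining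
point the norm of `X` is constant along a finite-codimensional subspace `K`; as `Y` is strictly
convex, `S` vanishes on `K`, so the range of `S` is finite-dimensional. Expanding the `yₙ` in a
basis of that range turns `z` into a finite sum of elementary tensors.
-/

open scoped InnerProductSpace

theorem eq_zero_of_norm_add_le_of_norm_sub_le {V : Type*} [NormedAddCommGroup V]
    [NormedSpace ℝ V] [StrictConvexSpace ℝ V] {u w : V} (h₁ : ‖u + w‖ ≤ ‖u‖)
    (h₂ : ‖u - w‖ ≤ ‖u‖) : w = 0 := by
  by_contra hw
  have hne : u + w ≠ u - w := fun h =>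
    hw (by linear_combination (norm := module) (1 / 2 : ℝ) • h)
  have hlt := norm_combo_lt_of_ne h₁ h₂ hne one_half_pos one_half_pos (add_halves 1)
  rw [show (1 / 2 : ℝ) • (u + w) + (1 / 2 : ℝ) • (u - w) = u by module] at hlt
  exact lt_irrefl _ hlt

namespace NormLocallyDependsOnFinitelyManyCoordinates

variable {X : Type*} [NormedAddCommGroup X] [NormedSpace ℝ X]

theorem exists_finiteDimensional_quotient_norm_add_eq
    (hX : NormLocallyDependsOnFinitelyManyCoordinates X) {x : X} (hx : x ≠ 0) :
    ∃ K : Submodule ℝ X, FiniteDimensional ℝ (X ⧸ K) ∧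
      ∃ ε > 0, ∀ h ∈ K, ‖h‖ < ε → ‖x + h‖ = ‖x‖ := by
  obtain ⟨ε, hε, N, f, φ, -, hφ⟩ := hX x hx
  let pr : X →ₗ[ℝ] Fin N → ℝ := LinearMap.pi fun i => (f i : X →ₗ[ℝ] ℝ)
  refine ⟨LinearMap.ker pr, pr.quotKerEquivRange.symm.finiteDimensional, ε, hε,
    fun h hK hε' => ?_⟩
  have hfh : ∀ i, f i h = 0 := fun i => congrFun hK i
  rw [hφ (x + h) (by simpa), hφ x (by simpa)]
  simp [hfh]

theorem finiteDimensional_range (hX : NormLocallyDependsOnFinitelyManyCoordinates X)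
    {V : Type*} [NormedAddCommGroup V] [NormedSpace ℝ V] [StrictConvexSpace ℝ V]
    (T : X →L[ℝ] V) {x₀ : X} (hx₀ : x₀ ≠ 0) (hT : ‖T x₀‖ = ‖T‖ * ‖x₀‖) :
    FiniteDimensional ℝ (LinearMap.range (T : X →ₗ[ℝ] V)) := by
  obtain ⟨K, hK, ε, hε, hnorm⟩ := hX.exists_finiteDimensional_quotient_norm_add_eq hx₀
  have hle : ∀ h ∈ K, ∀ s : ℝ, ‖s • h‖ < ε → ‖T x₀ + s • T h‖ ≤ ‖T x₀‖ := fun h hh s hs =>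
    calc ‖T x₀ + s • T h‖ = ‖T (x₀ + s • h)‖ := by simp
      _ ≤ ‖T‖ * ‖x₀ + s • h‖ := T.le_opNorm _
      _ = ‖T x₀‖ := by rw [hnorm _ (K.smul_mem s hh) hs, hT]
  have hKT : K ≤ LinearMap.ker (T : X →ₗ[ℝ] V) := by
    intro h hh
    set t := ε / (‖h‖ + 1)
    have ht : 0 < t := by positivity
    have hth : ‖t • h‖ < ε := by
      rw [norm_smul, Real.norm_of_nonneg ht.le, div_mul_eq_mul_div, div_lt_iff₀ (by positivity)]
      nlinarith
    have hzero := eq_zero_of_norm_add_le_of_norm_sub_le (hle h hh t hth)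
      (by simpa [sub_eq_add_neg] using hle h hh (-t) (by simpa using hth))
    exact (smul_eq_zero.1 hzero).resolve_left ht.ne'
  rw [← Submodule.range_liftQ K _ hKT]
  infer_instance

end NormLocallyDependsOnFinitelyManyCoordinates

section Hilbert

variable {X Y : Type*} [NormedAddCommGroup X] [NormedSpace ℝ X]
  [NormedAddCommGroup Y] [InnerProductSpace ℝ Y]

theorem exists_inner_eq_bilinear [CompleteSpace Y] (B : X →L[ℝ] Y →L[ℝ] ℝ) :
    ∃ S : X →L[ℝ] Y, ‖S‖ = ‖B‖ ∧ ∀ a b, ⟪S a, b⟫_ℝ = B a b :=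
  ⟨((InnerProductSpace.toDual ℝ Y).symm : StrongDual ℝ Y →L⋆[ℝ] Y).comp B,
    LinearIsometry.norm_toContinuousLinearMap_comp _, fun _ _ =>
    InnerProductSpace.toDual_symm_apply⟩

theorem norm_apply_eq_of_inner_eq_norm_mul {S : X →L[ℝ] Y} (hS : ‖S‖ ≤ 1) {x : X} {y : Y}
    (hy : y ≠ 0) (h : ⟪S x, y⟫_ℝ = ‖x‖ * ‖y‖) : ‖S x‖ = ‖x‖ := by
  refine le_antisymm ((S.le_of_opNorm_le hS x).trans_eq (one_mul _)) ?_
  exact le_of_mul_le_mul_right (h ▸ real_inner_le_norm _ _) (norm_pos_iff.2 hy)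

theorem mem_range_of_inner_eq_norm_mul {S : X →L[ℝ] Y} (hS : ‖S‖ ≤ 1) {x : X} {y : Y}
    (hx : x ≠ 0) (h : ⟪S x, y⟫_ℝ = ‖x‖ * ‖y‖) : y ∈ LinearMap.range (S : X →ₗ[ℝ] Y) := by
  rcases eq_or_ne y 0 with rfl | hy
  · exact zero_mem _
  have hSx := norm_apply_eq_of_inner_eq_norm_mul hS hy h
  have hray : ‖y‖ • S x = ‖S x‖ • y := inner_eq_norm_mul_iff_real.1 (hSx ▸ h)
  have hSx₀ : ‖S x‖ ≠ 0 := hSx ▸ norm_ne_zero_iff.2 hx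
  refine ⟨(‖S x‖⁻¹ * ‖y‖) • x, ?_⟩
  rw [ContinuousLinearMap.coe_coe, map_smul, mul_smul, hray, smul_smul, inv_mul_cancel₀ hSx₀,
    one_smul]

end Hilbert

theorem apply_eq_norm_mul_norm_of_tsum_eq {ι X Y : Type*} [NormedAddCommGroup X]
    [NormedSpace ℝ X] [NormedAddCommGroup Y] [NormedSpace ℝ Y] (B : X →L[ℝ] Y →L[ℝ] ℝ)
    (hB : ‖B‖ ≤ 1) {x : ι → X} {y : ι → Y} (hsum : Summable fun n => ‖x n‖ * ‖y n‖)
    (h : ∑' n, B (x n) (y n) = ∑' n, ‖x n‖ * ‖y n‖) (n : ι) :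
    B (x n) (y n) = ‖x n‖ * ‖y n‖ := by
  have hbound : ∀ n, ‖B (x n) (y n)‖ ≤ ‖x n‖ * ‖y n‖ := fun n =>
    (B.le_opNorm₂ _ _).trans <| by
      rw [mul_assoc]; exact mul_le_of_le_one_left (by positivity) hB
  have hle : ∀ n, B (x n) (y n) ≤ ‖x n‖ * ‖y n‖ := fun n => (Real.le_norm_self _).trans (hbound n)
  by_contra hne
  exact (Summable.tsum_lt_tsum hle (lt_of_le_of_ne (hle n) hne)
    (.of_norm_bounded hsum hbound) hsum).ne h

theorem tsum_mem_span_of_mem_finiteDimensional {X Y Z : Type*} [NormedAddCommGroup X]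
    [NormedSpace ℝ X] [CompleteSpace X] [NormedAddCommGroup Y] [NormedSpace ℝ Y]
    [NormedAddCommGroup Z] [NormedSpace ℝ Z] (m : X →L[ℝ] Y →L[ℝ] Z) (F : Submodule ℝ Y)
    [FiniteDimensional ℝ F] {x : ℕ → X} {y : ℕ → Y} (hsum : Summable fun n => ‖x n‖ * ‖y n‖)
    (hF : ∀ n, x n ≠ 0 → y n ∈ F) :
    ∑' n, m (x n) (y n) ∈ Submodule.span ℝ (Set.range fun p : X × Y => m p.1 p.2) := by
  -- `P` extends the coordinate functionals of `F` to all of `Y`; the terms with `x n = 0`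
  -- vanish whatever `y n` is.
  obtain ⟨P, hP⟩ := Submodule.ClosedComplemented.of_finiteDimensional F
  let b := Module.finBasis ℝ F
  let c : Fin (Module.finrank ℝ F) → Y →L[ℝ] ℝ := fun i =>
    (LinearMap.toContinuousLinearMap (b.coord i)).comp P
  have hexpand : ∀ n, m (x n) (y n) = ∑ i, m (c i (y n) • x n) (b i) := fun n => by
    rcases eq_or_ne (x n) 0 with hx | hx
    · simp [hx]
    have hPy : (P (y n) : Y) = y n := congrArg Subtype.val (hP ⟨y n, hF n hx⟩)
    conv_lhs => rw [← hPy, ← b.sum_repr (P (y n))]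
    simp only [Submodule.coe_sum, Submodule.coe_smul, map_sum, map_smul]
    rfl
  have hsummable : ∀ i, Summable fun n => c i (y n) • x n := fun i =>
    .of_norm_bounded (hsum.mul_left ‖c i‖) fun n => by
      rw [norm_smul]
      exact (mul_le_mul_of_nonneg_right ((c i).le_opNorm _) (norm_nonneg _)).trans_eq (by ring)
  rw [tsum_congr hexpand, (hasSum_sum (f := fun i n => m (c i (y n) • x n) (b i))
    fun i _ => (hsummable i).hasSum.mapL (m.flip (b i))).tsum_eq]
  exact Submodule.sum_mem _ fun i _ => Submodule.subset_span ⟨(_, _), rfl⟩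

theorem stmt_10_general {X Y Z : Type*}
    [NormedAddCommGroup X] [NormedSpace ℝ X] [CompleteSpace X]
    [NormedAddCommGroup Y] [InnerProductSpace ℝ Y] [CompleteSpace Y]
    [NormedAddCommGroup Z] [NormedSpace ℝ Z] [CompleteSpace Z]
    (hXloc : NormLocallyDependsOnFinitelyManyCoordinates X)
    (m : X →L[ℝ] Y →L[ℝ] Z) (hm : IsProjTensorProd.{0} m) :
    ∀ z : Z,
      (∃ (x : ℕ → X) (y : ℕ → Y), Summable (fun n => ‖x n‖ * ‖y n‖) ∧
        z = ∑' n : ℕ, m (x n) (y n) ∧ ‖z‖ = ∑' n : ℕ, ‖x n‖ * ‖y n‖) →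
      z ∈ Submodule.span ℝ (Set.range fun p : X × Y => m p.1 p.2) := by
  rintro z ⟨x, y, hsum, rfl, hnorm⟩
  obtain ⟨f, hf, hfz⟩ := exists_dual_vector'' ℝ (∑' n, m (x n) (y n))
  let B : X →L[ℝ] Y →L[ℝ] ℝ := (ContinuousLinearMap.compL ℝ Y Z ℝ f).comp m
  have hB : ‖B‖ ≤ 1 := B.opNorm_le_bound₂ zero_le_one fun a b => by
    simpa [B, ← hm.1 a b] using f.le_of_opNorm_le hf (m a b)
  have hBsum : ∑' n, B (x n) (y n) = ∑' n, ‖x n‖ * ‖y n‖ := by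
    rw [RCLike.ofReal_real_eq_id, id] at hfz
    rw [← hnorm, ← hfz, f.map_tsum (.of_norm_bounded hsum fun n => (hm.1 _ _).le)]
    rfl
  obtain ⟨S, hSB, hS⟩ := exists_inner_eq_bilinear B
  have hS₁ : ‖S‖ ≤ 1 := hSB ▸ hB
  have hattain : ∀ n, ⟪S (x n), y n⟫_ℝ = ‖x n‖ * ‖y n‖ := fun n =>
    (hS _ _).trans (apply_eq_norm_mul_norm_of_tsum_eq B hB hsum hBsum n)
  by_cases h₀ : ∃ n₀, x n₀ ≠ 0 ∧ y n₀ ≠ 0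
  · obtain ⟨n₀, hx₀, hy₀⟩ := h₀
    have hSx₀ := norm_apply_eq_of_inner_eq_norm_mul hS₁ hy₀ (hattain n₀)
    have := hXloc.finiteDimensional_range S hx₀ <|
      le_antisymm (S.le_opNorm _) (hSx₀ ▸ mul_le_of_le_one_left (norm_nonneg _) hS₁)
    exact tsum_mem_span_of_mem_finiteDimensional m _ hsum fun n hx =>
      mem_range_of_inner_eq_norm_mul hS₁ hx (hattain n)
  · push Not at h₀
    exact tsum_mem_span_of_mem_finiteDimensional m ⊥ hsum fun n hx => by simp [h₀ n hx]

/-- If `X` is an infinite-dimensional Banach space whose norm locally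
depends upon finitely many coordinates and `Y` is an infinite-dimensional Hilbert space,
then every tensor attaining its projective norm lies in the algebraic tensor product
`X ⊗ Y` (the span of the elementary tensors). -/
theorem stmt_10 {X Y Z : Type*}
    [NormedAddCommGroup X] [NormedSpace ℝ X] [CompleteSpace X]
    [NormedAddCommGroup Y] [InnerProductSpace ℝ Y] [CompleteSpace Y]
    [NormedAddCommGroup Z] [NormedSpace ℝ Z] [CompleteSpace Z]
    (hXinf : ¬ FiniteDimensional ℝ X) (hYinf : ¬ FiniteDimensional ℝ Y)
    (hXloc : NormLocallyDependsOnFinitelyManyCoordinates X)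
    (m : X →L[ℝ] Y →L[ℝ] Z) (hm : IsProjTensorProd.{0} m) :
    ∀ z : Z,
      (∃ (x : ℕ → X) (y : ℕ → Y), Summable (fun n => ‖x n‖ * ‖y n‖) ∧
        z = ∑' n : ℕ, m (x n) (y n) ∧ ‖z‖ = ∑' n : ℕ, ‖x n‖ * ‖y n‖) →
      z ∈ Submodule.span ℝ (Set.range fun p : X × Y => m p.1 p.2) :=
  stmt_10_general hXloc m hm
end

section
/- Let X be a Banach space whose dual X* has the w*-sequential Kadec–Klee property and suppose X is reflexive. Then the norm of X is strongly subdifferentiable: for every ε > 0 and x ∈ S_X there exists η > 0 such that whenever y* ∈ S_{X*} satisfies y*(x) > 1 − η, there exists x* ∈ S_{X*} with x*(x) = 1 and ‖x* − y*‖ < ε. -/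
/-!
Suppose the conclusion fails at `x`: then there are norm-one functionals `fₙ` with `fₙ x → 1`
staying `ε` away from every norm-one `g` with `g x = 1`. In the dual of a reflexive space,
bounded weak-star closed sets are weak-star sequentially compact: the closed span `Z` of the
`fₙ` is separable, hence separated by a countable set `D ⊆ X`; a diagonal subsequence converges
on `D`; reflexivity and Hahn–Banach make `Z` weak-star closed, so all weak-star cluster points
of the subsequence lie in `Z` and agree on `D`, hence coincide, and Banach–Alaoglu makes the
subsequence converge. Its limit `g` satisfies `g x = 1 = ‖g‖`, so the Kadec–Klee property
gives `fₙ → g` in norm, a contradiction.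
-/

open Filter Topology Metric Set NormedSpace

theorem TopologicalSpace.IsSeparable.exists_countable_separating
    {𝕜 E F : Type*} [DenselyNormedField 𝕜] [NormedAddCommGroup E] [NormedSpace 𝕜 E]
    [NormedAddCommGroup F] [NormedSpace 𝕜 F] {S : Set (E →L[𝕜] F)} (hS : IsSeparable S) :
    ∃ D : Set E, D.Countable ∧ ∀ v ∈ S, (∀ z ∈ D, v z = 0) → v = 0 := by
  obtain ⟨c, hc, hSc⟩ := hS
  choose z hz_norm hz_apply using fun (w : E →L[𝕜] F) (k : ℕ) =>
    w.exists_lt_apply_of_lt_opNorm (sub_lt_self ‖w‖ (Nat.one_div_pos_of_nat (n := k)))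
  refine ⟨⋃ w ∈ c, range (z w), hc.biUnion fun w _ => countable_range _, fun v hv hvD => ?_⟩
  have hclose : ∀ w ∈ c, ∀ k : ℕ, ‖v‖ ≤ 2 * ‖v - w‖ + 1 / (k + 1) := by
    intro w hw k
    have hvz : v (z w k) = 0 := hvD _ (mem_biUnion hw (mem_range_self k))
    have hwz : ‖w (z w k)‖ ≤ ‖v - w‖ :=
      calc ‖w (z w k)‖ = ‖(v - w) (z w k)‖ := by simp [hvz]
        _ ≤ ‖v - w‖ * ‖z w k‖ := (v - w).le_opNorm _
        _ ≤ ‖v - w‖ := mul_le_of_le_one_right (norm_nonneg _) (hz_norm w k).le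
    linarith [norm_le_insert' v w, hz_apply w k]
  refine norm_le_zero_iff.mp (le_of_forall_pos_lt_add fun δ hδ => ?_)
  obtain ⟨w, hw, hvw⟩ := Metric.mem_closure_iff.mp (hSc hv) (δ / 4) (by positivity)
  obtain ⟨k, hk⟩ := exists_nat_one_div_lt (half_pos hδ)
  linarith [hclose w hw k, dist_eq_norm v w]

theorem ContinuousLinearMap.exists_subseq_tendsto_of_countable
    {𝕜 E F : Type*} [NontriviallyNormedField 𝕜] [SeminormedAddCommGroup E] [NormedSpace 𝕜 E]
    [NormedAddCommGroup F] [NormedSpace 𝕜 F] [ProperSpace F] {D : Set E} (hD : D.Countable)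
    {u : ℕ → E →L[𝕜] F} {R : ℝ} (hR : ∀ n, ‖u n‖ ≤ R) :
    ∃ φ : ℕ → ℕ, StrictMono φ ∧ ∀ z ∈ D, ∃ l, Tendsto (fun n => u (φ n) z) atTop (𝓝 l) := by
  have := hD.to_subtype
  have hcube : ∀ n, (fun z : D => u n z) ∈ univ.pi fun z : D => closedBall 0 (R * ‖(z : E)‖) :=
    fun n z _ => mem_closedBall_zero_iff.2 <|
      ((u n).le_opNorm z).trans (mul_le_mul_of_nonneg_right (hR n) (norm_nonneg _))
  obtain ⟨L, -, φ, hφ, hL⟩ := (isCompact_univ_pi fun z : D =>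
    ProperSpace.isCompact_closedBall (0 : F) (R * ‖(z : E)‖)).tendsto_subseq hcube
  exact ⟨φ, hφ, fun z hz => ⟨L ⟨z, hz⟩, tendsto_pi_nhds.1 hL ⟨z, hz⟩⟩⟩

namespace WeakDual

variable {E : Type*} [NormedAddCommGroup E] [NormedSpace ℝ E]

theorem isClosed_toStrongDual_preimage_of_convex
    (hrefl : Function.Surjective (inclusionInDoubleDual ℝ E)) {C : Set (StrongDual ℝ E)}
    (hconv : Convex ℝ C) (hclosed : IsClosed C) : IsClosed (toStrongDual ⁻¹' C) := by
  refine closure_subset_iff_isClosed.mp fun h hh => by_contra fun hnot => ?_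
  obtain ⟨Φ, t, hΦC, hΦh⟩ := geometric_hahn_banach_closed_point hconv hclosed hnot
  -- by reflexivity the separating functional is evaluation at a point, so weak-star continuous
  obtain ⟨z, rfl⟩ := hrefl Φ
  have hsub : closure (toStrongDual ⁻¹' C) ⊆ {h' : WeakDual ℝ E | h' z ≤ t} :=
    closure_minimal (fun h' hh' => (hΦC _ hh').le)
      (isClosed_le (eval_continuous z) continuous_const)
  exact (hsub hh).not_gt hΦh

theorem isSeqCompact_of_isBounded_of_isClosed_of_reflexive
    (hrefl : Function.Surjective (inclusionInDoubleDual ℝ E)) {s : Set (WeakDual ℝ E)}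
    (hb : Bornology.IsBounded s) (hc : IsClosed s) : IsSeqCompact s := by
  intro u hu
  have hs : IsCompact s := isCompact_of_bounded_of_closed hb hc
  obtain ⟨R, hR⟩ := isBounded_iff_forall_norm_le.mp
    (isBounded_toWeakDual_preimage_iff_isBounded.mpr hb)
  set Z := (Submodule.span ℝ (range fun n => toStrongDual (u n))).topologicalClosure
  obtain ⟨D, hD, hDsep⟩ : ∃ D : Set E, D.Countable ∧
      ∀ v ∈ Z, (∀ z ∈ D, v z = 0) → v = 0 := by
    refine TopologicalSpace.IsSeparable.exists_countable_separating ?_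
    rw [Submodule.topologicalClosure_coe]
    exact (countable_range _).isSeparable.span.closure
  obtain ⟨φ, hφ, hconv⟩ := ContinuousLinearMap.exists_subseq_tendsto_of_countable hD
    (u := fun n => toStrongDual (u n)) fun n => hR _ (hu n)
  have hmemZ : ∀ c, MapClusterPt c atTop (u ∘ φ) → toStrongDual c ∈ Z := fun c hc =>
    (isClosed_toStrongDual_preimage_of_convex hrefl Z.convex
      (Submodule.isClosed_topologicalClosure _)).mem_of_mapClusterPt hc <|
      .of_forall fun n => show toStrongDual (u (φ n)) ∈ Z from
        Submodule.le_topologicalClosure _ (Submodule.subset_span (mem_range_self (φ n)))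
  have happly : ∀ c, MapClusterPt c atTop (u ∘ φ) → ∀ z ∈ D, ∀ l,
      Tendsto (fun n => u (φ n) z) atTop (𝓝 l) → c z = l := fun c hc z _ l hl =>
    have hcz := hc.continuousAt_comp (eval_continuous z).continuousAt
    eq_of_nhds_neBot (hcz.clusterPt.mono hl)
  obtain ⟨c₀, hc₀s, hc₀⟩ := hs.exists_mapClusterPt (f := atTop) (u := u ∘ φ)
    (tendsto_principal.2 (.of_forall fun n => hu (φ n)))
  refine ⟨c₀, hc₀s, φ, hφ, hs.tendsto_nhds_of_unique_mapClusterPt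
    (.of_forall fun n => hu (φ n)) fun c _ hc => ?_⟩
  refine toStrongDual.injective <| sub_eq_zero.mp <|
    hDsep _ (Z.sub_mem (hmemZ c hc) (hmemZ c₀ hc₀)) fun z hz => ?_
  obtain ⟨l, hl⟩ := hconv z hz
  simp [happly c hc z hz l hl, happly c₀ hc₀ z hz l hl]

end WeakDual

theorem stmt_13_general {X : Type*} [NormedAddCommGroup X] [NormedSpace ℝ X]
    (hrefl : Function.Surjective (NormedSpace.inclusionInDoubleDual ℝ X))
    (hKK : WStarSeqKK X) :
    ∀ ε > (0 : ℝ), ∀ x : X, ‖x‖ = 1 → ∃ η > (0 : ℝ),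
      ∀ f : X →L[ℝ] ℝ, ‖f‖ = 1 → f x > 1 - η →
        ∃ g : X →L[ℝ] ℝ, ‖g‖ = 1 ∧ g x = 1 ∧ ‖g - f‖ < ε := by
  intro ε hε x hx
  by_contra! hbad
  choose f hf1 hfx hfar using fun n : ℕ => hbad (1 / (n + 1)) Nat.one_div_pos_of_nat
  obtain ⟨g', hg'1, φ, hφ, hlim⟩ :=
    WeakDual.isSeqCompact_of_isBounded_of_isClosed_of_reflexive hrefl
      (WeakDual.isBounded_closedBall 0 1) (WeakDual.isClosed_closedBall 0 1)
      (x := fun n => StrongDual.toWeakDual (f n)) fun n => by simp [hf1]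
  set g := WeakDual.toStrongDual g'
  have hconv : ∀ z, Tendsto (fun n => f (φ n) z) atTop (𝓝 (g z)) := fun z =>
    ((WeakDual.eval_continuous z).tendsto g').comp hlim
  have hg_le : ‖g‖ ≤ 1 := by simpa using hg'1
  have hgx_le : g x ≤ ‖g‖ := by simpa [hx] using (le_abs_self (g x)).trans (g.le_opNorm x)
  have hgx : g x = 1 := by
    refine le_antisymm (hgx_le.trans hg_le) (le_of_tendsto_of_tendsto' ?_ (hconv x)
      fun n => (hfx (φ n)).le)
    simpa using tendsto_const_nhds.sub
      ((tendsto_one_div_add_atTop_nhds_zero_nat (𝕜 := ℝ)).comp hφ.tendsto_atTop)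
  have hg1 : ‖g‖ = 1 := le_antisymm hg_le (hgx ▸ hgx_le)
  obtain ⟨n, hn⟩ := ((hKK _ g (fun n => hf1 _) hg1 hconv).eventually (gt_mem_nhds hε)).exists
  exact (hfar (φ n) g hg1 hgx).not_gt (by rwa [norm_sub_rev])

/-- If `X` is a reflexive Banach space whose dual has the w*-sequential
Kadec–Klee property, then the norm of `X` is strongly subdifferentiable (stated via the
ε-η characterisation). -/
theorem stmt_13 {X : Type*} [NormedAddCommGroup X] [NormedSpace ℝ X] [CompleteSpace X]
    (hrefl : Function.Surjective (NormedSpace.inclusionInDoubleDual ℝ X))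
    (hKK : WStarSeqKK X) :
    ∀ ε > (0 : ℝ), ∀ x : X, ‖x‖ = 1 → ∃ η > (0 : ℝ),
      ∀ f : X →L[ℝ] ℝ, ‖f‖ = 1 → f x > 1 - η →
        ∃ g : X →L[ℝ] ℝ, ‖g‖ = 1 ∧ g x = 1 ∧ ‖g - f‖ < ε :=
  stmt_13_general hrefl hKK
end

section
/- Let X be a reflexive Banach space, Y a strictly convex Banach space, and T : X → Y a bounded operator with ‖T‖ = 1 that attains its norm at some x₀ ∈ S_X, i.e., ‖T(x₀)‖ = 1. If additionally the norm of X locally depends upon finitely many coordinates near x₀ (there exist ε > 0, f_1, …, f_N ∈ X* and continuous φ : ℝ^N → ℝ with ‖y‖ = φ(f_1(y),…,f_N(y)) for ‖y − x₀‖ < ε), then T has finite rank — more precisely, T vanishes on the finite-codimensional subspace ∩_{i=1}^N ker(f_i). -/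
/-!
Near `x₀` the norm only sees the coordinates `fᵢ`, so it is constant on `x₀ + w` for small `w`
in `⋂ ker fᵢ`. Then `T (x₀ + w)` and `T (x₀ - w)` lie in the ball of radius `‖T x₀‖` and have
`T x₀` as midpoint; by strict convexity of `Y` they coincide, i.e. `T w = 0`. Rescaling gives
`T = 0` on all of `⋂ ker fᵢ`, so `T` factors through the finite-dimensional quotient by it.
-/

theorem ContinuousLinearMap.map_eq_zero_of_norm_add_le_of_norm_sub_le
    {X Y : Type*} [NormedAddCommGroup X] [NormedSpace ℝ X]
    [NormedAddCommGroup Y] [NormedSpace ℝ Y] [StrictConvexSpace ℝ Y]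
    (T : X →L[ℝ] Y) {x₀ v : X} (hatt : ‖T x₀‖ = ‖T‖ * ‖x₀‖)
    (hadd : ‖x₀ + v‖ ≤ ‖x₀‖) (hsub : ‖x₀ - v‖ ≤ ‖x₀‖) : T v = 0 := by
  have hle : ∀ u, ‖u‖ ≤ ‖x₀‖ → ‖T u‖ ≤ ‖T x₀‖ := fun u hu =>
    hatt ▸ T.le_opNorm_of_le hu
  have heq : T (x₀ + v) = T (x₀ - v) := by
    by_contra hne
    have hmid : (1 / 2 : ℝ) • T (x₀ + v) + (1 / 2 : ℝ) • T (x₀ - v) = T x₀ := by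
      simp only [map_add, map_sub]
      module
    have := norm_combo_lt_of_ne (hle _ hadd) (hle _ hsub) hne (a := 1 / 2) (b := 1 / 2)
      (by norm_num) (by norm_num) (by norm_num)
    rw [hmid] at this
    exact lt_irrefl _ this
  have h2v : (2 : ℝ) • T v = 0 := by
    rw [map_add, map_sub] at heq
    rw [two_smul, ← sub_eq_zero.mpr heq]
    abel
  simpa using h2v

theorem norm_add_eq_of_forall_apply_eq_zero {X ι : Type*} [NormedAddCommGroup X]
    [NormedSpace ℝ X] {x₀ : X} {ε : ℝ} (hε : 0 < ε) (f : ι → X →L[ℝ] ℝ)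
    (φ : (ι → ℝ) → ℝ) (hloc : ∀ y : X, ‖y - x₀‖ < ε → ‖y‖ = φ (fun i => f i y))
    {w : X} (hw : ∀ i, f i w = 0) (hwε : ‖w‖ < ε) : ‖x₀ + w‖ = ‖x₀‖ := by
  rw [hloc (x₀ + w) (by simpa using hwε), hloc x₀ (by simpa using hε)]
  simp only [map_add, hw, add_zero]

theorem LinearMap.finiteDimensional_range_of_ker_le {K V W E : Type*} [Field K]
    [AddCommGroup V] [Module K V] [AddCommGroup W] [Module K W] [FiniteDimensional K W]
    [AddCommGroup E] [Module K E] (g : V →ₗ[K] W) (T : V →ₗ[K] E) (h : ker g ≤ ker T) :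
    FiniteDimensional K (range T) := by
  have : FiniteDimensional K (V ⧸ ker g) := Module.Finite.equiv g.quotKerEquivRange.symm
  rw [← Submodule.range_liftQ (ker g) T h]
  exact Module.Finite.range _

theorem stmt_15_general {X Y : Type*} [NormedAddCommGroup X] [NormedSpace ℝ X]
    [NormedAddCommGroup Y] [NormedSpace ℝ Y] [StrictConvexSpace ℝ Y]
    (T : X →L[ℝ] Y) (hT : ‖T‖ = 1)
    (x₀ : X) (hx₀ : ‖x₀‖ = 1) (hatt : ‖T x₀‖ = 1)
    (ε : ℝ) (hε : 0 < ε) (N : ℕ) (f : Fin N → X →L[ℝ] ℝ)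
    (φ : (Fin N → ℝ) → ℝ)
    (hloc : ∀ y : X, ‖y - x₀‖ < ε → ‖y‖ = φ (fun i => f i y)) :
    (∀ v : X, (∀ i, f i v = 0) → T v = 0) ∧
      FiniteDimensional ℝ (LinearMap.range (T : X →ₗ[ℝ] Y)) := by
  have hattains : ‖T x₀‖ = ‖T‖ * ‖x₀‖ := by rw [hT, hx₀, hatt, one_mul]
  have hker : ∀ v : X, (∀ i, f i v = 0) → T v = 0 := by
    intro v hv
    rcases eq_or_ne v 0 with rfl | hv0
    · exact map_zero T
    obtain ⟨d, hd0, hdε, -⟩ := rescale_to_shell (c := (2 : ℝ)) (by norm_num) hε hv0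
    have hconst : ∀ s : ℝ, ‖s • v‖ < ε → ‖x₀ + s • v‖ = ‖x₀‖ := fun s hs =>
      norm_add_eq_of_forall_apply_eq_zero hε f φ hloc (by simp [hv]) hs
    have hTdv : T (d • v) = 0 := T.map_eq_zero_of_norm_add_le_of_norm_sub_le hattains
      (hconst d hdε).le
      (by rw [sub_eq_add_neg, ← neg_smul]; exact (hconst (-d) (by simpa using hdε)).le)
    simpa [hd0] using hTdv
  refine ⟨hker, LinearMap.finiteDimensional_range_of_ker_le
    (LinearMap.pi fun i => (f i : X →ₗ[ℝ] ℝ)) _ fun v hv => ?_⟩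
  exact hker v fun i => congrFun (LinearMap.mem_ker.mp hv) i

/-- A norm-one norm-attaining operator from a reflexive space whose norm
locally depends upon finitely many coordinates near the attaining point, into a strictly
convex space, vanishes on the finite-codimensional subspace `⋂ ker fᵢ` (so it has finite
rank). -/
theorem stmt_15 {X Y : Type*} [NormedAddCommGroup X] [NormedSpace ℝ X] [CompleteSpace X]
    [NormedAddCommGroup Y] [NormedSpace ℝ Y] [CompleteSpace Y] [StrictConvexSpace ℝ Y]
    (hrefl : Function.Surjective (NormedSpace.inclusionInDoubleDual ℝ X))
    (T : X →L[ℝ] Y) (hT : ‖T‖ = 1)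
    (x₀ : X) (hx₀ : ‖x₀‖ = 1) (hatt : ‖T x₀‖ = 1)
    (ε : ℝ) (hε : 0 < ε) (N : ℕ) (f : Fin N → X →L[ℝ] ℝ)
    (φ : (Fin N → ℝ) → ℝ) (hφ : Continuous φ)
    (hloc : ∀ y : X, ‖y - x₀‖ < ε → ‖y‖ = φ (fun i => f i y)) :
    (∀ v : X, (∀ i, f i v = 0) → T v = 0) ∧
      FiniteDimensional ℝ (LinearMap.range (T : X →ₗ[ℝ] Y)) :=
  stmt_15_general T hT x₀ hx₀ hatt ε hε N f φ hloc
end
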